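/- arXiv:2107.12557 — 4 statements merged into one kernel-verified Lean document; each statement's English description precedes it below -/
import Mathlib

section
/- With notation as above, the invariant ring ℂ[x₁, x₂]^{ψ_k} of the dicyclic group representation ψ_k is generated as a ℂ-algebra by u₁ = x₁²x₂², u₂ = x₁^{2h} + x₂^{2h}, and u₃ = x₁x₂(x₁^{2h} − x₂^{2h}), where h = m/gcd(m,k). -/
open MvPolynomial

noncomputable def dicU₁ : MvPolynomial (Fin 2) ℂ := X 0 ^ 2 * X 1 ^ 2
noncomputable def dicU₂ (h : ℕ) : MvPolynomial (Fin 2) ℂ := X 0 ^ (2 * h) + X 1 ^ (2 * h)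
noncomputable def dicU₃ (h : ℕ) : MvPolynomial (Fin 2) ℂ :=
  X 0 * X 1 * (X 0 ^ (2 * h) - X 1 ^ (2 * h))

/-- The substitution of `ψ_k(σ) = diag(ζ^k, ζ^{-k})` on `ℂ[x₁,x₂]`. -/
noncomputable def dicSigmaSub (ζ : ℂ) (k : ℕ) :
    MvPolynomial (Fin 2) ℂ →ₐ[ℂ] MvPolynomial (Fin 2) ℂ :=
  aeval ![ζ ^ k • X 0, ζ⁻¹ ^ k • X 1]

/-- The substitution of `ψ_k(α) = [[0,1],[-1,0]]` on `ℂ[x₁,x₂]`. -/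
noncomputable def dicAlphaSub : MvPolynomial (Fin 2) ℂ →ₐ[ℂ] MvPolynomial (Fin 2) ℂ :=
  aeval ![X 1, -X 0]

/-!
Every monomial `x₁^a x₂^b` is an eigenvector of `σ` (eigenvalue `ζ^{k(a-b)}`) and of
`α² = -1` (eigenvalue `(-1)^{a+b}`), so the monomials of an invariant `f` satisfy
`a ≡ b [MOD 2]` and `2m ∣ k(a - b)`, hence `a ≡ b [MOD 2h]`. As `α f = f`, `2f = f + α f` is
a combination of the orbit sums `x₁^a x₂^b + α(x₁^a x₂^b)`. For `a = b + 2ht` such a sum is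
`u₁^c (P^t + Q^t)` or `u₁^c x₁x₂ (P^t - Q^t)` with `P = x₁^{2h}`, `Q = x₂^{2h}`; both lie in
`ℂ[u₁, u₂, u₃]` because `P + Q = u₂`, `PQ = u₁^h`, `x₁x₂(P - Q) = u₃` and
`s_{t+2} = (P + Q) s_{t+1} - PQ s_t`. Conversely the `uᵢ` are invariant since `(ζ^k)^{2h} = 1`.
-/

namespace MvPolynomial

variable {R σ : Type*} [CommSemiring R]

theorem aeval_smul_X_monomial (c : σ → R) (d : σ →₀ ℕ) (a : R) :
    aeval (fun i => c i • X i) (monomial d a) =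
      monomial d ((d.prod fun i e => c i ^ e) * a) := by
  rw [aeval_monomial, monomial_eq, map_mul, map_finsuppProd]
  simp only [smul_eq_C_mul, mul_pow, ← map_pow, Finsupp.prod_mul, algebraMap_eq]
  ring

theorem coeff_aeval_smul_X (c : σ → R) (f : MvPolynomial σ R) (d : σ →₀ ℕ) :
    coeff d (aeval (fun i => c i • X i) f) = (d.prod fun i e => c i ^ e) * coeff d f := by
  classical
  induction f using MvPolynomial.induction_on' with
  | monomial d' a =>
    rw [aeval_smul_X_monomial, coeff_monomial, coeff_monomial]
    split_ifs with h <;> simp [h]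
  | add p q hp hq => simp only [map_add, coeff_add, hp, hq, mul_add]

theorem coeff_aeval_smul_X_two (a b : R) (f : MvPolynomial (Fin 2) R) (d : Fin 2 →₀ ℕ) :
    coeff d (aeval ![a • X 0, b • X 1] f) = a ^ d 0 * b ^ d 1 * coeff d f := by
  have hdiag : ![a • X 0, b • X 1] = fun i => ![a, b] i • (X i : MvPolynomial (Fin 2) R) := by
    ext1 i; fin_cases i <;> rfl
  rw [hdiag, coeff_aeval_smul_X, Finsupp.prod_fintype _ _ (fun _ => pow_zero _),
    Fin.prod_univ_two]
  rfl

theorem pow_mul_pow_eq_one_of_aeval_smul_X_eq_self [IsDomain R] {a b : R}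
    {f : MvPolynomial (Fin 2) R} (hf : aeval ![a • X 0, b • X 1] f = f) {d : Fin 2 →₀ ℕ}
    (hd : d ∈ f.support) : a ^ d 0 * b ^ d 1 = 1 := by
  have hcoeff := congrArg (coeff d) hf
  rw [coeff_aeval_smul_X_two] at hcoeff
  exact (mul_eq_right₀ (mem_support_iff.mp hd)).mp hcoeff

theorem monomial_one_eq_X_pow_mul_X_pow (d : Fin 2 →₀ ℕ) :
    monomial d (1 : R) = X 0 ^ d 0 * X 1 ^ d 1 := by
  rw [monomial_eq, C_1, one_mul, Finsupp.prod_fintype _ _ (fun _ => pow_zero _),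
    Fin.prod_univ_two]

end MvPolynomial

theorem Subalgebra.mul_pow_add_mul_pow_mem {R A : Type*} [CommRing R] [CommRing A]
    [Algebra R A] {S : Subalgebra R A} {P Q a b : A} (hsum : P + Q ∈ S) (hprod : P * Q ∈ S)
    (h0 : a + b ∈ S) (h1 : a * P + b * Q ∈ S) (t : ℕ) : a * P ^ t + b * Q ^ t ∈ S := by
  induction t using Nat.twoStepInduction with
  | zero => simpa using h0
  | one => simpa using h1
  | more t ht ht' =>
    have hrec : a * P ^ (t + 2) + b * Q ^ (t + 2) =
        (P + Q) * (a * P ^ (t + 1) + b * Q ^ (t + 1)) - P * Q * (a * P ^ t + b * Q ^ t) := by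
      ring
    rw [hrec]
    exact sub_mem (mul_mem hsum ht') (mul_mem hprod ht)

theorem Nat.ModEq.two_mul_div_gcd {m k a b : ℕ} (hm : 0 < m) (h2 : a ≡ b [MOD 2])
    (hk : k * a ≡ k * b [MOD 2 * m]) : a ≡ b [MOD 2 * (m / m.gcd k)] := by
  rw [Nat.modEq_iff_dvd] at *
  obtain ⟨c, hc⟩ := h2
  have hmc : (k * 0 : ℤ) ≡ k * c [ZMOD m] := by
    rw [Int.modEq_iff_dvd, ← mul_dvd_mul_iff_left two_ne_zero]
    have e : (2 : ℤ) * (k * c - k * 0) = ((k * b : ℕ) : ℤ) - (k * a : ℕ) := by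
      push_cast; linear_combination -(k : ℤ) * hc
    exact_mod_cast e ▸ hk
  have hdvd := (Int.ModEq.cancel_left_div_gcd (by exact_mod_cast hm) hmc).dvd
  rw [Int.gcd_natCast_natCast, sub_zero] at hdvd
  push_cast
  rw [hc]
  exact mul_dvd_mul_left 2 hdvd

theorem Nat.dvd_mul_div_gcd (m k : ℕ) : m ∣ k * (m / m.gcd k) := by
  rw [← Nat.mul_div_assoc _ (Nat.gcd_dvd_left m k), mul_comm]
  exact Nat.dvd_lcm_left m k

theorem dicAlphaSub_X_pow_mul_X_pow (a b : ℕ) :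
    dicAlphaSub (X 0 ^ a * X 1 ^ b) = X 1 ^ a * (-X 0) ^ b := by
  simp [dicAlphaSub]

theorem dicAlphaSub_comp_dicAlphaSub :
    dicAlphaSub.comp dicAlphaSub = aeval ![(-1 : ℂ) • X 0, (-1 : ℂ) • X 1] := by
  ext i : 1
  fin_cases i <;> simp [dicAlphaSub]

theorem modEq_two_of_dicAlphaSub_eq_self {f : MvPolynomial (Fin 2) ℂ} (hf : dicAlphaSub f = f)
    {d : Fin 2 →₀ ℕ} (hd : d ∈ f.support) : d 0 ≡ d 1 [MOD 2] := by
  have hf2 : aeval ![(-1 : ℂ) • X 0, (-1 : ℂ) • X 1] f = f := by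
    rw [← dicAlphaSub_comp_dicAlphaSub, AlgHom.comp_apply, hf, hf]
  have hsign := pow_mul_pow_eq_one_of_aeval_smul_X_eq_self hf2 hd
  rw [← pow_add, neg_one_pow_eq_one_iff_even (by norm_num)] at hsign
  obtain ⟨r, hr⟩ := hsign
  unfold Nat.ModEq
  omega

theorem modEq_of_dicSigmaSub_eq_self {ζ : ℂ} {n k : ℕ} (hn : 0 < n) (hζ : IsPrimitiveRoot ζ n)
    {f : MvPolynomial (Fin 2) ℂ} (hf : dicSigmaSub ζ k f = f) {d : Fin 2 →₀ ℕ}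
    (hd : d ∈ f.support) : k * d 0 ≡ k * d 1 [MOD n] := by
  have hpow := pow_mul_pow_eq_one_of_aeval_smul_X_eq_self hf hd
  rw [← pow_mul, ← pow_mul, inv_pow, mul_inv_eq_one₀ (pow_ne_zero _ (hζ.ne_zero hn.ne'))] at hpow
  rwa [(hζ.isOfFinOrder hn.ne').pow_eq_pow_iff_modEq, ← hζ.eq_orderOf] at hpow

section Generators

variable (h : ℕ)

theorem add_dicAlphaSub_X_pow_add_mem_adjoin (b t : ℕ) :
    X 0 ^ (b + 2 * h * t) * X 1 ^ b + dicAlphaSub (X 0 ^ (b + 2 * h * t) * X 1 ^ b) ∈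
      Algebra.adjoin ℂ {dicU₁, dicU₂ h, dicU₃ h} := by
  have hu₁ : dicU₁ ∈ Algebra.adjoin ℂ {dicU₁, dicU₂ h, dicU₃ h} :=
    Algebra.subset_adjoin (by simp)
  have hu₂ : dicU₂ h ∈ Algebra.adjoin ℂ {dicU₁, dicU₂ h, dicU₃ h} :=
    Algebra.subset_adjoin (by simp)
  have hu₃ : dicU₃ h ∈ Algebra.adjoin ℂ {dicU₁, dicU₂ h, dicU₃ h} :=
    Algebra.subset_adjoin (by simp)
  have hprod : X 0 ^ (2 * h) * X 1 ^ (2 * h) = dicU₁ ^ h := by rw [dicU₁]; ring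
  have hP := Subalgebra.mul_pow_add_mul_pow_mem (a := 1) (b := 1) hu₂ (hprod ▸ pow_mem hu₁ h)
    (add_mem (one_mem _) (one_mem _)) (by simpa [dicU₂] using hu₂) t
  have hQ := Subalgebra.mul_pow_add_mul_pow_mem (a := X 0 * X 1) (b := -(X 0 * X 1)) hu₂
    (hprod ▸ pow_mem hu₁ h) (by simp) (by convert hu₃ using 1; rw [dicU₃]; ring) t
  rw [dicAlphaSub_X_pow_mul_X_pow]
  obtain ⟨c, rfl | rfl⟩ := Nat.even_or_odd' b
  · convert mul_mem (pow_mem hu₁ c) hP using 1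
    rw [(even_two_mul c).neg_pow, dicU₁]; ring
  · convert mul_mem (pow_mem hu₁ c) hQ using 1
    rw [(odd_two_mul_add_one c).neg_pow, dicU₁]; ring

theorem add_dicAlphaSub_mem_adjoin {a b : ℕ} (hab : a ≡ b [MOD 2 * h]) :
    X 0 ^ a * X 1 ^ b + dicAlphaSub (X 0 ^ a * X 1 ^ b) ∈
      Algebra.adjoin ℂ {dicU₁, dicU₂ h, dicU₃ h} := by
  rcases le_total b a with hba | hab'
  · obtain ⟨t, ht⟩ := (Nat.modEq_iff_dvd' hba).mp hab.symm
    obtain rfl : a = b + 2 * h * t := by omega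
    exact add_dicAlphaSub_X_pow_add_mem_adjoin h b t
  · obtain ⟨t, ht⟩ := (Nat.modEq_iff_dvd' hab').mp hab
    obtain rfl : b = a + 2 * h * t := by omega
    have hsign : ((-1 : MvPolynomial (Fin 2) ℂ) ^ a) ^ 2 = 1 := by
      rw [← pow_mul', (even_two_mul a).neg_one_pow]
    convert mul_mem (pow_mem (neg_mem (one_mem _)) a)
      (add_dicAlphaSub_X_pow_add_mem_adjoin h a t) using 1
    rw [dicAlphaSub_X_pow_mul_X_pow, dicAlphaSub_X_pow_mul_X_pow, pow_add (-X 0),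
      ((even_two_mul h).mul_right t).neg_pow, neg_pow (X 0 : MvPolynomial (Fin 2) ℂ) a]
    linear_combination -(X 0 ^ a * X 1 ^ (a + 2 * h * t)) * hsign

theorem adjoin_le_equalizer_dicAlphaSub :
    Algebra.adjoin ℂ {dicU₁, dicU₂ h, dicU₃ h} ≤
      AlgHom.equalizer dicAlphaSub (AlgHom.id ℂ _) := by
  have hneg : (-X 0 : MvPolynomial (Fin 2) ℂ) ^ (2 * h) = X 0 ^ (2 * h) :=
    (even_two_mul h).neg_pow _
  refine Algebra.adjoin_le ?_
  rintro _ (rfl | rfl | rfl) <;>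
    simp only [SetLike.mem_coe, AlgHom.mem_equalizer, AlgHom.id_apply, dicU₁, dicU₂, dicU₃,
      dicAlphaSub, map_mul, map_add, map_sub, map_pow, aeval_X, Matrix.cons_val_zero,
      Matrix.cons_val_one, hneg] <;> ring

theorem adjoin_le_equalizer_aeval_smul_X {a b : ℂ} (hab : a * b = 1) (ha : a ^ (2 * h) = 1) :
    Algebra.adjoin ℂ {dicU₁, dicU₂ h, dicU₃ h} ≤
      AlgHom.equalizer (aeval ![a • X 0, b • X 1]) (AlgHom.id ℂ _) := by
  have hb : b ^ (2 * h) = 1 := by simpa [mul_pow, ha] using congrArg (· ^ (2 * h)) hab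
  have hCab : C a * C b = (1 : MvPolynomial (Fin 2) ℂ) := by rw [← C_mul, hab, C_1]
  have hCa : C a ^ (2 * h) = (1 : MvPolynomial (Fin 2) ℂ) := by rw [← C_pow, ha, C_1]
  have hCb : C b ^ (2 * h) = (1 : MvPolynomial (Fin 2) ℂ) := by rw [← C_pow, hb, C_1]
  refine Algebra.adjoin_le ?_
  rintro _ (rfl | rfl | rfl) <;>
    simp only [SetLike.mem_coe, AlgHom.mem_equalizer, AlgHom.id_apply, dicU₁, dicU₂, dicU₃,
      map_mul, map_add, map_sub, map_pow, aeval_X, Matrix.cons_val_zero,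
      Matrix.cons_val_one, smul_eq_C_mul]
  · linear_combination (C a * C b + 1) * X 0 ^ 2 * X 1 ^ 2 * hCab
  · linear_combination X 0 ^ (2 * h) * hCa + X 1 ^ (2 * h) * hCb
  · linear_combination X 0 * X 1 * (X 0 ^ (2 * h) - X 1 ^ (2 * h)) * hCab +
      C a * C b * X 0 * X 1 * X 0 ^ (2 * h) * hCa -
      C a * C b * X 0 * X 1 * X 1 ^ (2 * h) * hCb

end Generators

theorem adjoin_le_equalizer_dicSigmaSub {m k : ℕ} (hm : 0 < m) {ζ : ℂ}
    (hζ : IsPrimitiveRoot ζ (2 * m)) :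
    Algebra.adjoin ℂ {dicU₁, dicU₂ (m / m.gcd k), dicU₃ (m / m.gcd k)} ≤
      AlgHom.equalizer (dicSigmaSub ζ k) (AlgHom.id ℂ _) := by
  have hε : (ζ ^ k) ^ (2 * (m / m.gcd k)) = 1 := by
    rw [← pow_mul, hζ.pow_eq_one_iff_dvd, mul_left_comm]
    exact mul_dvd_mul_left 2 (Nat.dvd_mul_div_gcd m k)
  have hεinv : ζ ^ k * ζ⁻¹ ^ k = 1 := by
    rw [← mul_pow, mul_inv_cancel₀ (hζ.ne_zero (by omega)), one_pow]
  exact adjoin_le_equalizer_aeval_smul_X _ hεinv hε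

theorem mem_adjoin_of_dicSigmaSub_eq_self_of_dicAlphaSub_eq_self {m k : ℕ} (hm : 0 < m)
    {ζ : ℂ} (hζ : IsPrimitiveRoot ζ (2 * m)) {f : MvPolynomial (Fin 2) ℂ}
    (hσ : dicSigmaSub ζ k f = f) (hα : dicAlphaSub f = f) :
    f ∈ Algebra.adjoin ℂ {dicU₁, dicU₂ (m / m.gcd k), dicU₃ (m / m.gcd k)} := by
  have horbit : ∀ d ∈ f.support,
      X 0 ^ d 0 * X 1 ^ d 1 + dicAlphaSub (X 0 ^ d 0 * X 1 ^ d 1) ∈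
        Algebra.adjoin ℂ {dicU₁, dicU₂ (m / m.gcd k), dicU₃ (m / m.gcd k)} := fun d hd =>
    add_dicAlphaSub_mem_adjoin _ <| (modEq_two_of_dicAlphaSub_eq_self hα hd).two_mul_div_gcd hm
      (modEq_of_dicSigmaSub_eq_self (by omega) hζ hσ hd)
  have hsum : (2 : ℂ) • f = ∑ d ∈ f.support,
      coeff d f • (X 0 ^ d 0 * X 1 ^ d 1 + dicAlphaSub (X 0 ^ d 0 * X 1 ^ d 1)) := by
    conv_lhs => rw [two_smul]; enter [2]; rw [← hα]
    conv_lhs => rw [f.as_sum]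
    simp only [map_sum, ← Finset.sum_add_distrib, smul_add, ← map_smul, smul_eq_mul,
      mul_one, ← monomial_one_eq_X_pow_mul_X_pow]
  have h2f := hsum ▸ Subalgebra.sum_mem _ fun d hd => Subalgebra.smul_mem _ (horbit d hd) _
  simpa [smul_smul] using Subalgebra.smul_mem _ h2f (2⁻¹ : ℂ)

theorem stmt_4_general (m k : ℕ) (hm : 0 < m) (ζ : ℂ)
    (hζ : IsPrimitiveRoot ζ (2 * m)) (h : ℕ) (hh : h = m / Nat.gcd m k)
    (f : MvPolynomial (Fin 2) ℂ) :
    (dicSigmaSub ζ k f = f ∧ dicAlphaSub f = f) ↔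
      f ∈ Algebra.adjoin ℂ {dicU₁, dicU₂ h, dicU₃ h} := by
  subst hh
  exact ⟨fun ⟨hσ, hα⟩ => mem_adjoin_of_dicSigmaSub_eq_self_of_dicAlphaSub_eq_self hm hζ hσ hα,
    fun hf => ⟨adjoin_le_equalizer_dicSigmaSub hm hζ hf, adjoin_le_equalizer_dicAlphaSub _ hf⟩⟩

/-- The invariant ring `ℂ[x₁,x₂]^{ψ_k}` of the dicyclic group representation `ψ_k`
is generated as a `ℂ`-algebra by `u₁ = x₁²x₂²`, `u₂ = x₁^{2h} + x₂^{2h}` and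
`u₃ = x₁x₂(x₁^{2h} - x₂^{2h})`, where `h = m / gcd(m,k)`. -/
theorem stmt_4 (m k : ℕ) (hm : 0 < m) (hk : 0 < k) (ζ : ℂ)
    (hζ : IsPrimitiveRoot ζ (2 * m)) (h : ℕ) (hh : h = m / Nat.gcd m k)
    (f : MvPolynomial (Fin 2) ℂ) :
    (dicSigmaSub ζ k f = f ∧ dicAlphaSub f = f) ↔
      f ∈ Algebra.adjoin ℂ {dicU₁, dicU₂ h, dicU₃ h} :=
  stmt_4_general m k hm ζ hζ h hh f
end

section
/- For every natural number l ≥ 1 and natural h ≥ 1, the polynomials x₁^{2hl} + x₂^{2hl} and x₁x₂(x₁^{2hl} − x₂^{2hl}) lie in the subalgebra of ℂ[x₁,x₂] generated by u₁ = x₁²x₂², u₂ = x₁^{2h} + x₂^{2h}, and u₃ = x₁x₂(x₁^{2h} − x₂^{2h}). -/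
open MvPolynomial

lemma dic_key (h : ℕ) (l : ℕ) :
    (X 0 ^ (2 * h * l) + X 1 ^ (2 * h * l) ∈
      Algebra.adjoin ℂ {dicU₁, dicU₂ h, dicU₃ h}) ∧
    (X 0 * X 1 * (X 0 ^ (2 * h * l) - X 1 ^ (2 * h * l)) ∈
      Algebra.adjoin ℂ {dicU₁, dicU₂ h, dicU₃ h}) := by
  set A := Algebra.adjoin ℂ {dicU₁, dicU₂ h, dicU₃ h} with hA
  have hu1 : dicU₁ ∈ A := Algebra.subset_adjoin (by simp)
  have hu2 : dicU₂ h ∈ A := Algebra.subset_adjoin (by simp)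
  have hu3 : dicU₃ h ∈ A := Algebra.subset_adjoin (by simp)
  induction l using Nat.twoStepInduction with
  | zero =>
      constructor
      · simp only [Nat.mul_zero, pow_zero]
        exact A.add_mem A.one_mem A.one_mem
      · simp only [Nat.mul_zero, pow_zero, sub_self, mul_zero]
        exact A.zero_mem
  | one =>
      simp only [Nat.mul_one]
      exact ⟨hu2, hu3⟩
  | more n ih1 ih2 =>
      have e1 : X 0 ^ (2 * h * (n + 2)) + X 1 ^ (2 * h * (n + 2)) =
          (X 0 ^ (2 * h * (n + 1)) + X 1 ^ (2 * h * (n + 1))) * dicU₂ h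
            - dicU₁ ^ h * (X 0 ^ (2 * h * n) + X 1 ^ (2 * h * n)) := by
        simp only [dicU₁, dicU₂, pow_mul, mul_pow]
        ring
      have e2 : X 0 * X 1 * (X 0 ^ (2 * h * (n + 2)) - X 1 ^ (2 * h * (n + 2))) =
          (X 0 * X 1 * (X 0 ^ (2 * h * (n + 1)) - X 1 ^ (2 * h * (n + 1)))) * dicU₂ h
            - dicU₁ ^ h * (X 0 * X 1 * (X 0 ^ (2 * h * n) - X 1 ^ (2 * h * n))) := by
        simp only [dicU₁, dicU₂, pow_mul, mul_pow]
        ring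
      exact ⟨e1 ▸ A.sub_mem (A.mul_mem ih2.1 hu2) (A.mul_mem (A.pow_mem hu1 h) ih1.1),
             e2 ▸ A.sub_mem (A.mul_mem ih2.2 hu2) (A.mul_mem (A.pow_mem hu1 h) ih1.2)⟩

/-- For all `l ≥ 1`, `h ≥ 1`, the polynomials `x₁^{2hl} + x₂^{2hl}` and
`x₁x₂(x₁^{2hl} - x₂^{2hl})` lie in the subalgebra generated by `u₁, u₂, u₃`. -/
theorem stmt_6 (h l : ℕ) (hh : 1 ≤ h) (hl : 1 ≤ l) :
    (X 0 ^ (2 * h * l) + X 1 ^ (2 * h * l) ∈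
      Algebra.adjoin ℂ {dicU₁, dicU₂ h, dicU₃ h}) ∧
    (X 0 * X 1 * (X 0 ^ (2 * h * l) - X 1 ^ (2 * h * l)) ∈
      Algebra.adjoin ℂ {dicU₁, dicU₂ h, dicU₃ h}) := by
  exact dic_key h l
end

section
/- The function F(t₁,t₂,t₃) = (1/2)t₃²t₁ + (1/2)t₂²t₃ + t₂⁴/(8t₁) + t₂²/(4t₁²) − 1/(60t₁³) (the dual Ã₃ potential) satisfies the WDVV associativity equations on the domain t₁ ≠ 0, with flat metric Π_{ij} = ∂_{t₃}∂_{t_i}∂_{t_j}F = δ_{i+j,4}. -/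
/-!
Indices are 0-based, as in the code. Every term of `F` is a Laurent monomial in `t₀` that is
polynomial in `t₁, t₂`, so on `t₀ ≠ 0` its partial derivatives are computed termwise. Since
`∂₂∂ᵢ∂ⱼF = Ωᵢⱼ`, the third derivatives are the structure constants of a three-dimensional
Frobenius algebra with unit `e₂`, and for such a tensor the WDVV equations collapse to the single
relation `F₀₀₀ = F₀₁₁² - F₀₀₁ F₁₁₁`, which is a rational identity in `t₀, t₁`.
-/

/-- Partial derivative of a function of `n` real variables. -/
noncomputable def pd {n : ℕ} (i : Fin n) (f : (Fin n → ℝ) → ℝ) : (Fin n → ℝ) → ℝ :=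
  fun t => deriv (fun s => f (Function.update t i s)) (t i)

/-- The anti-diagonal metric `Ω^{ij} = δ_{i+j,4}` (1-based), inverse of
`Π_{ij} = ∂₃∂_i∂_j F`. -/
def antiDiag : Matrix (Fin 3) (Fin 3) ℝ := fun a b => if (a : ℕ) + (b : ℕ) = 2 then 1 else 0

open Function (update update_self update_of_ne)

def SatisfiesWDVV (c : Fin 3 → Fin 3 → Fin 3 → ℝ) : Prop :=
  ∀ i j q n : Fin 3,
    ∑ l, ∑ p, c i j l * antiDiag l p * c p q n = ∑ l, ∑ p, c n j l * antiDiag l p * c p q i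

/-- A symmetric tensor with `c 2 j l = antiDiag j l`: its remaining entries only depend on how
many of the indices equal `1`. -/
def frobeniusTensor (a b c d : ℝ) (i j l : Fin 3) : ℝ :=
  if i = 2 then antiDiag j l else if j = 2 then antiDiag i l else if l = 2 then antiDiag i j
  else [a, b, c, d].getD (i + j + l : ℕ) 0

theorem satisfiesWDVV_frobeniusTensor {a b c d : ℝ} (h : a = c ^ 2 - b * d) :
    SatisfiesWDVV (frobeniusTensor a b c d) := by
  intro i j q n
  fin_cases i <;> fin_cases j <;> fin_cases q <;> fin_cases n <;>
    simp [Fin.sum_univ_three, frobeniusTensor, antiDiag] <;> grind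

theorem pd_congr_of_eqOn {n : ℕ} {s : Set (Fin n → ℝ)} (hs : IsOpen s) {f g : (Fin n → ℝ) → ℝ}
    (hfg : Set.EqOn f g s) (i : Fin n) {t : Fin n → ℝ} (ht : t ∈ s) : pd i f t = pd i g t := by
  have hcont : Continuous (update t i) := continuous_const.update i continuous_id
  have hev : ∀ᶠ x in nhds (t i), update t i x ∈ s :=
    hcont.continuousAt.preimage_mem_nhds (by simpa using hs.mem_nhds ht)
  exact Filter.EventuallyEq.deriv_eq (hev.mono fun x hx => hfg hx)

/-- Only `t₀`, the coordinate kept away from `0`, may carry a negative exponent. -/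
structure LaurentMonomial where
  coeff : ℝ
  exp0 : ℤ
  exp1 : ℕ
  exp2 : ℕ

namespace LaurentMonomial

noncomputable def eval (m : LaurentMonomial) (t : Fin 3 → ℝ) : ℝ :=
  m.coeff * t 0 ^ m.exp0 * t 1 ^ m.exp1 * t 2 ^ m.exp2

/-- The truncated `m - 1`, `n - 1` at `0` are harmless: the coefficient vanishes there. -/
noncomputable def pderiv : Fin 3 → LaurentMonomial → LaurentMonomial
  | 0, ⟨c, k, m, n⟩ => ⟨c * k, k - 1, m, n⟩
  | 1, ⟨c, k, m, n⟩ => ⟨c * m, k, m - 1, n⟩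
  | 2, ⟨c, k, m, n⟩ => ⟨c * n, k, m, n - 1⟩

theorem hasDerivAt_eval_update (m : LaurentMonomial) (i : Fin 3) {t : Fin 3 → ℝ}
    (ht : t 0 ≠ 0) :
    HasDerivAt (fun s => m.eval (update t i s)) ((m.pderiv i).eval t) (t i) := by
  obtain ⟨c, k, p, q⟩ := m
  match i with
  | 0 =>
    have h := (((hasDerivAt_zpow k (t 0) (.inl ht)).const_mul c).mul_const (t 1 ^ p)).mul_const
      (t 2 ^ q)
    simp only [eval, update_self, update_of_ne, ne_eq, Fin.reduceEq, not_false_eq_true]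
    exact h.congr_deriv (by simp only [pderiv]; ring)
  | 1 =>
    have h := ((hasDerivAt_pow p (t 1)).const_mul (c * t 0 ^ k)).mul_const (t 2 ^ q)
    simp only [eval, update_self, update_of_ne, ne_eq, Fin.reduceEq, not_false_eq_true]
    exact h.congr_deriv (by simp only [pderiv]; ring)
  | 2 =>
    have h := (hasDerivAt_pow q (t 2)).const_mul (c * t 0 ^ k * t 1 ^ p)
    simp only [eval, update_self, update_of_ne, ne_eq, Fin.reduceEq, not_false_eq_true]
    exact h.congr_deriv (by simp only [pderiv]; ring)

noncomputable def evalList (L : List LaurentMonomial) (t : Fin 3 → ℝ) : ℝ :=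
  (L.map (·.eval t)).sum

theorem hasDerivAt_evalList_update (L : List LaurentMonomial) (i : Fin 3) {t : Fin 3 → ℝ}
    (ht : t 0 ≠ 0) :
    HasDerivAt (fun s => evalList L (update t i s)) (evalList (L.map (pderiv i)) t) (t i) := by
  induction L with
  | nil => simpa [evalList] using hasDerivAt_const (t i) (0 : ℝ)
  | cons m L ih =>
    simp only [evalList, List.map_cons, List.sum_cons] at ih ⊢
    exact (m.hasDerivAt_eval_update i ht).add ih

theorem _root_.Set.EqOn.pd_evalList {f : (Fin 3 → ℝ) → ℝ} {L : List LaurentMonomial}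
    (hf : Set.EqOn f (evalList L) {t | t 0 ≠ 0}) (i : Fin 3) :
    Set.EqOn (pd i f) (evalList (L.map (pderiv i))) {t | t 0 ≠ 0} := fun _ ht =>
  (pd_congr_of_eqOn (isOpen_ne_fun (continuous_apply 0) continuous_const) hf i ht).trans
    (hasDerivAt_evalList_update L i ht).deriv

end LaurentMonomial

open LaurentMonomial

noncomputable def potentialTerms : List LaurentMonomial :=
  [⟨1 / 2, 1, 0, 2⟩, ⟨1 / 2, 0, 2, 1⟩, ⟨1 / 8, -1, 4, 0⟩, ⟨1 / 4, -2, 2, 0⟩, ⟨-1 / 60, -3, 0, 0⟩]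

theorem evalList_potentialTerms (t : Fin 3 → ℝ) :
    evalList potentialTerms t = (1 / 2) * (t 2) ^ 2 * t 0 + (1 / 2) * (t 1) ^ 2 * t 2 +
      (t 1) ^ 4 / (8 * t 0) + (t 1) ^ 2 / (4 * (t 0) ^ 2) - 1 / (60 * (t 0) ^ 3) := by
  simp [evalList, potentialTerms, LaurentMonomial.eval]
  ring

theorem pd_pd_pd_eq_frobeniusTensor {F : (Fin 3 → ℝ) → ℝ}
    (hF : ∀ t : Fin 3 → ℝ, F t = (1 / 2) * (t 2) ^ 2 * t 0 + (1 / 2) * (t 1) ^ 2 * t 2 +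
      (t 1) ^ 4 / (8 * t 0) + (t 1) ^ 2 / (4 * (t 0) ^ 2) - 1 / (60 * (t 0) ^ 3))
    {t : Fin 3 → ℝ} (ht : t 0 ≠ 0) (i j l : Fin 3) :
    pd i (pd j (pd l F)) t = frobeniusTensor
      (-3 * t 1 ^ 4 / (4 * t 0 ^ 4) - 6 * t 1 ^ 2 / t 0 ^ 5 + 1 / t 0 ^ 6)
      (t 1 ^ 3 / t 0 ^ 3 + 3 * t 1 / t 0 ^ 4) (-3 * t 1 ^ 2 / (2 * t 0 ^ 2) - 1 / t 0 ^ 3)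
      (3 * t 1 / t 0) i j l := by
  have hF' : Set.EqOn F (evalList potentialTerms) {t | t 0 ≠ 0} := fun t _ => by
    rw [hF, evalList_potentialTerms]
  rw [((hF'.pd_evalList l).pd_evalList j).pd_evalList i ht]
  fin_cases i <;> fin_cases j <;> fin_cases l <;>
    simp [evalList, potentialTerms, LaurentMonomial.eval, pderiv, frobeniusTensor, antiDiag] <;>
    field_simp <;> ring

/-- The dual Ã₃ potential satisfies the WDVV equations on `t₁ ≠ 0` with flat
metric `Π_{ij} = ∂₃∂_i∂_j F = δ_{i+j,4}`. -/
theorem stmt_12 (F : (Fin 3 → ℝ) → ℝ)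
    (hF : ∀ t : Fin 3 → ℝ, F t = (1 / 2) * (t 2) ^ 2 * t 0 + (1 / 2) * (t 1) ^ 2 * t 2 + (t 1) ^ 4 / (8 * t 0) + (t 1) ^ 2 / (4 * (t 0) ^ 2) - 1 / (60 * (t 0) ^ 3)) :
    ∀ t : Fin 3 → ℝ, t 0 ≠ 0 →
       ∀ i j q n : Fin 3,
        (∑ l : Fin 3, ∑ p : Fin 3,
          pd i (pd j (pd l F)) t * antiDiag l p * pd p (pd q (pd n F)) t) =
        (∑ l : Fin 3, ∑ p : Fin 3,
          pd n (pd j (pd l F)) t * antiDiag l p * pd p (pd q (pd i F)) t) := by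
  intro t ht
  simp only [pd_pd_pd_eq_frobeniusTensor hF ht]
  exact satisfiesWDVV_frobeniusTensor (by field_simp; ring)
end

section
/- For the Coxeter group of type A_r (the symmetric group S_{r+1}) with reflection invariants u¹,…,u^r of degrees 2,3,…,r+1, the polynomials z obtained as θ*(u^i) for even-degree u^i together with θ*(u^κ u^j) for odd-degree u^j (κ the minimal odd-degree index) form r algebraically independent invariant polynomials of the representation ρ_new = ρ_sign ⊗ ρ_ref, with degrees 2, 4, 6, …, 2⌊(r+1)/2⌋, 6, 8, …, 2⌈(r+3)/2⌉. -/
open MvPolynomial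


lemma aux_indep {r : ℕ} (κ : Fin r) (hκ : ¬ Even (κ : ℕ))
    (u : Fin r → MvPolynomial (Fin r) ℂ)
    (hindep : AlgebraicIndependent ℂ u) :
    AlgebraicIndependent ℂ (fun i : Fin r => if Even (i : ℕ) then u i else u κ * u i) := by
  classical
  set v : Fin r → MvPolynomial (Fin r) ℂ :=
    fun i : Fin r => if Even (i : ℕ) then X i else X κ * X i with hv
  set S : (Fin r →₀ ℕ) → ℕ := fun m => ∑ i : Fin r, if Even (i : ℕ) then 0 else m i with hSdef
  set σ : (Fin r →₀ ℕ) → (Fin r →₀ ℕ) := fun m => m + Finsupp.single κ (S m) with hσdef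
  have hSadd : ∀ a b, S (a + b) = S a + S b := by
    intro a b
    simp only [hSdef, Finsupp.add_apply, ← Finset.sum_add_distrib]
    apply Finset.sum_congr rfl
    intro i _
    split <;> simp
  have hSsingle : ∀ s : ℕ, S (Finsupp.single κ s) = s := by
    intro s
    simp only [hSdef]
    rw [Finset.sum_eq_single κ]
    · simp [hκ]
    · intro i _ hi
      rw [Finsupp.single_apply, if_neg (Ne.symm hi)]
      simp
    · intro h; exact absurd (Finset.mem_univ κ) h
  have hσinj : Function.Injective σ := by
    intro a b hab
    have h2 : ∀ m, S (σ m) = 2 * S m := by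
      intro m; simp only [hσdef, hSadd, hSsingle]; ring
    have h1 : S (σ a) = S (σ b) := by rw [hab]
    rw [h2, h2] at h1
    have hS' : S a = S b := by omega
    simp only [hσdef, hS'] at hab
    exact add_right_cancel hab
  have hmono : ∀ (m : Fin r →₀ ℕ) (c : ℂ),
      aeval v (monomial m c) = monomial (σ m) c := by
    intro m c
    rw [aeval_monomial]
    have hprod : (m.prod fun i k => v i ^ k) = monomial (σ m) 1 := by
      have step : ∀ i ∈ m.support,
          v i ^ m i = X κ ^ (if Even (i : ℕ) then 0 else m i) * X i ^ m i := by
        intro i _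
        by_cases h : Even (i : ℕ) <;> simp [hv, h, mul_pow]
      rw [Finsupp.prod, Finset.prod_congr rfl step, Finset.prod_mul_distrib,
        Finset.prod_pow_eq_pow_sum]
      have hsum : (∑ i ∈ m.support, if Even (i : ℕ) then 0 else m i) = S m := by
        simp only [hSdef]
        apply Finset.sum_subset (Finset.subset_univ _)
        intro i _ hi
        simp [Finsupp.notMem_support_iff.mp hi]
      rw [hsum]
      have : (∏ i ∈ m.support, X i ^ m i : MvPolynomial (Fin r) ℂ) = monomial m 1 := by
        rw [monomial_eq]; simp [Finsupp.prod]
      rw [this, X_pow_eq_monomial, monomial_mul, one_mul, hσdef, add_comm]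
    rw [hprod]
    rw [show (algebraMap ℂ (MvPolynomial (Fin r) ℂ)) c = C c from rfl, C_mul_monomial,
      mul_one]
  have hvinj : Function.Injective (aeval v : MvPolynomial (Fin r) ℂ →ₐ[ℂ] MvPolynomial (Fin r) ℂ) := by
    rw [injective_iff_map_eq_zero]
    intro p hp
    by_contra h0
    obtain ⟨m₀, hm₀⟩ := Finset.nonempty_of_ne_empty (by simpa using h0 : p.support ≠ ∅)
    have hc : coeff (σ m₀) (aeval v p) = coeff m₀ p := by
      conv_lhs => rw [p.as_sum, map_sum]
      simp_rw [hmono]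
      rw [MvPolynomial.coeff_sum, Finset.sum_eq_single m₀]
      · rw [coeff_monomial, if_pos rfl]
      · intro m _ hne
        rw [coeff_monomial, if_neg (fun h => hne (hσinj h))]
      · intro h; exact absurd hm₀ h
    rw [hp] at hc
    exact (MvPolynomial.mem_support_iff.mp hm₀) hc.symm
  have hcomp : ((aeval u : MvPolynomial (Fin r) ℂ →ₐ[ℂ] MvPolynomial (Fin r) ℂ).comp
      (aeval v)) = aeval (fun i : Fin r => if Even (i : ℕ) then u i else u κ * u i) := by
    apply MvPolynomial.algHom_ext
    intro i
    by_cases h : Even (i : ℕ) <;> simp [hv, h]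
  rw [algebraicIndependent_iff_injective_aeval] at hindep ⊢
  rw [← hcomp]
  exact hindep.comp hvinj

/-- For the Coxeter group of type `A_r` (the symmetric group `S_{r+1}`) with basic
reflection invariants `u¹,…,u^r` of degrees `2,3,…,r+1`, the polynomials obtained by
taking the even-degree `u^i` together with the products `u^κ u^j` of the minimal
odd-degree invariant `u^κ` (of degree 3) with the odd-degree `u^j` form `r`
algebraically independent invariant polynomials of `ρ_new = ρ_sign ⊗ ρ_ref`, of the
indicated degrees.  (Invariance under `ρ_new` of a homogeneous polynomial `f` means
`sign(w)^{deg f} · (w·f) = f`.) -/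
theorem stmt_19 (r : ℕ) (hr : 2 ≤ r)
    (ρ : Equiv.Perm (Fin (r + 1)) →*
      (MvPolynomial (Fin r) ℂ ≃ₐ[ℂ] MvPolynomial (Fin r) ℂ))
    (hlin : ∀ (w : Equiv.Perm (Fin (r + 1))) (f : MvPolynomial (Fin r) ℂ) (q : ℕ),
      f.IsHomogeneous q → (ρ w f).IsHomogeneous q)
    (u : Fin r → MvPolynomial (Fin r) ℂ)
    (hdeg : ∀ i : Fin r, (u i).IsHomogeneous ((i : ℕ) + 2))
    (hindep : AlgebraicIndependent ℂ u)
    (hinv : ∀ (w : Equiv.Perm (Fin (r + 1))) (i : Fin r), ρ w (u i) = u i)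
    (z : Fin r → MvPolynomial (Fin r) ℂ)
    (hz : ∀ i : Fin r, z i =
      if Even (i : ℕ) then u i else u ⟨1, by omega⟩ * u i) :
    AlgebraicIndependent ℂ z ∧
    (∀ i : Fin r,
      (z i).IsHomogeneous (if Even (i : ℕ) then (i : ℕ) + 2 else (i : ℕ) + 5)) ∧
    (∀ (w : Equiv.Perm (Fin (r + 1))) (i : Fin r),
      ((Equiv.Perm.sign w : ℤ) : ℂ) ^
          (if Even (i : ℕ) then (i : ℕ) + 2 else (i : ℕ) + 5) • ρ w (z i) = z i) := by
  have hκ : ¬ Even ((⟨1, by omega⟩ : Fin r) : ℕ) := by simp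
  have hz' : z = fun i : Fin r =>
      if Even (i : ℕ) then u i else u ⟨1, by omega⟩ * u i := funext hz
  subst hz'
  refine ⟨aux_indep _ hκ u hindep, ?_, ?_⟩
  · intro i
    by_cases h : Even (i : ℕ)
    · simpa [h] using hdeg i
    · simp only [h, if_neg, if_false]
      rw [show (i : ℕ) + 5 = ((⟨1, by omega⟩ : Fin r) : ℕ) + 2 + ((i : ℕ) + 2) by simp; omega]
      exact (hdeg _).mul (hdeg i)
  · intro w i
    have hsgn : ∀ n : ℕ, Even n → ((Equiv.Perm.sign w : ℤ) : ℂ) ^ n = 1 := by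
      intro n hn
      rcases Int.units_eq_one_or (Equiv.Perm.sign w) with h | h <;>
        simp [h, hn.neg_one_pow]
    by_cases h : Even (i : ℕ)
    · have he : Even ((i : ℕ) + 2) := h.add even_two
      simp only [h, if_pos, if_true, hinv, hsgn _ he, one_smul]
    · have he : Even ((i : ℕ) + 5) := by
        rw [Nat.even_iff]
        have := Nat.not_even_iff.mp h
        omega
      simp only [h, if_neg, if_false, map_mul, hinv, hsgn _ he, one_smul]
end
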